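/- arXiv:1609.04586 — 3 statements merged into one kernel-verified Lean document; each statement's English description precedes it below -/
import Mathlib

section
/- Let F be a finite field and let M, K, W be mutually independent random vectors, uniformly distributed over F^t, F^Δ, F^Θ respectively. Let A, B, G be matrices over F with k rows and t, Δ, Θ columns respectively, and let C = AM + BK + GW ∈ F^k. Then the total variation distance ‖p_{M,C} − p_M ⊗ p_C‖₁ is either equal to 0 or at least 1 − 1/|F| ≥ 1/2. Consequently, if ‖p_{M,C} − p_M ⊗ p_C‖₁ ≤ ε for some ε < 1/2, then M and C are independent, i.e., p_{M,C} = p_M ⊗ p_C (perfect secrecy holds). -/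
open Finset

noncomputable section

/-- Sample space: the triple `(M, K, W)` of mutually independent uniform random
vectors over `F^t × F^Δ × F^Θ`, modeled as the uniform distribution on this product. -/
abbrev SampleSpace (F : Type) (t Δ Θ : ℕ) : Type :=
  (Fin t → F) × (Fin Δ → F) × (Fin Θ → F)

/-- Joint pmf of `(M, C)` where `C = A M + B K + G W` and `(M,K,W)` is uniform on the
sample space. -/
def jointMC {F : Type} [Field F] [Fintype F] [DecidableEq F] {k t Δ Θ : ℕ}
    (A : Matrix (Fin k) (Fin t) F) (B : Matrix (Fin k) (Fin Δ) F)
    (G : Matrix (Fin k) (Fin Θ) F) (m : Fin t → F) (c : Fin k → F) : ℝ :=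
  ((univ.filter (fun ω : SampleSpace F t Δ Θ =>
      ω.1 = m ∧ A.mulVec ω.1 + B.mulVec ω.2.1 + G.mulVec ω.2.2 = c)).card : ℝ) /
    (Fintype.card (SampleSpace F t Δ Θ) : ℝ)

/-- Marginal pmf of `M`. -/
def pM {F : Type} [Field F] [Fintype F] [DecidableEq F] {k t Δ Θ : ℕ}
    (A : Matrix (Fin k) (Fin t) F) (B : Matrix (Fin k) (Fin Δ) F)
    (G : Matrix (Fin k) (Fin Θ) F) (m : Fin t → F) : ℝ :=
  ∑ c : Fin k → F, jointMC A B G m c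

/-- Marginal pmf of `C`. -/
def pC {F : Type} [Field F] [Fintype F] [DecidableEq F] {k t Δ Θ : ℕ}
    (A : Matrix (Fin k) (Fin t) F) (B : Matrix (Fin k) (Fin Δ) F)
    (G : Matrix (Fin k) (Fin Θ) F) (c : Fin k → F) : ℝ :=
  ∑ m : Fin t → F, jointMC A B G m c

/-- Total variation distance `‖p_{M,C} − p_M ⊗ p_C‖₁`. -/
def tvMC {F : Type} [Field F] [Fintype F] [DecidableEq F] {k t Δ Θ : ℕ}
    (A : Matrix (Fin k) (Fin t) F) (B : Matrix (Fin k) (Fin Δ) F)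
    (G : Matrix (Fin k) (Fin Θ) F) : ℝ :=
  2⁻¹ * ∑ m : Fin t → F, ∑ c : Fin k → F,
    |jointMC A B G m c - pM A B G m * pC A B G c|

/-!
Writing `R` for the range of `(K, W) ↦ BK + GW`, the noise `C - AM` is uniform on `R` and
independent of `M`, so `(M, C)` is uniform on `{(m, c) | c - Am ∈ R}`. If `A` maps into `R`
this set is `F^t × R` and `M`, `C` are independent. Otherwise `V = A⁻¹(R)` is a proper
subspace, so `|F| · |V| ≤ |F^t|`; on each row `m` the joint law puts all of its mass `|F^t|⁻¹`
on the coset `Am + R` while the product law puts only `|V| / |F^t|²` there, and the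
total variation is at least the sum of these gaps, `1 - |V| / |F^t| ≥ 1 - 1/|F|`.
-/

lemma card_filter_sub_mem {G S : Type*} [AddCommGroup G] [Fintype G] [SetLike S G]
    [AddSubgroupClass S G] (H : S) (g : G) [DecidablePred fun x => x - g ∈ H] :
    #{x | x - g ∈ H} = Nat.card H := by
  classical
  rw [Nat.card_eq_fintype_card, Fintype.card_subtype]
  exact card_nbij' (· - g) (· + g) (fun _ => by simp) (fun _ => by simp) (fun _ => by simp)
    (fun _ => by simp)

lemma AddMonoidHom.card_fiber_mul_natCard_range {G H : Type*} [AddGroup G] [Fintype G]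
    [AddGroup H] [DecidableEq H] (f : G →+ H) {y : H} (hy : y ∈ Set.range f) :
    #{x | f x = y} * Nat.card (Set.range f) = Fintype.card G := by
  rw [AddMonoidHom.card_fiber_eq_of_mem_range f hy ⟨0, map_zero f⟩, ← Nat.card_eq_fintype_card,
    ← f.ker.card_mul_index, AddSubgroup.index_ker, ← f.coe_range]
  congr 1
  rw [← Fintype.card_subtype, ← Nat.card_eq_fintype_card]
  rfl

lemma Submodule.card_mul_natCard_le_of_ne_top {K V : Type*} [Field K] [Fintype K]
    [AddCommGroup V] [Module K V] [Finite V] {W : Submodule K V} (h : W ≠ ⊤) :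
    Fintype.card K * Nat.card W ≤ Nat.card V := by
  rw [Module.natCard_eq_pow_finrank (K := K), Module.natCard_eq_pow_finrank (K := K) (V := V),
    Nat.card_eq_fintype_card, ← pow_succ']
  exact Nat.pow_le_pow_right Fintype.card_pos (Submodule.finrank_lt h)

lemma two_mul_sub_le_sum_abs_sub {α : Type*} [Fintype α] {p q : α → ℝ}
    (hpq : ∑ a, p a = ∑ a, q a) (s : Finset α) :
    2 * (∑ a ∈ s, p a - ∑ a ∈ s, q a) ≤ ∑ a, |p a - q a| := by
  classical
  have hs : ∑ a ∈ s, (p a - q a) ≤ ∑ a ∈ s, |p a - q a| :=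
    sum_le_sum fun a _ => le_abs_self _
  have hsc : ∑ a ∈ sᶜ, (q a - p a) ≤ ∑ a ∈ sᶜ, |p a - q a| :=
    sum_le_sum fun a _ => neg_sub (p a) (q a) ▸ neg_le_abs _
  rw [sum_sub_distrib] at hs hsc
  rw [← sum_add_sum_compl s p, ← sum_add_sum_compl s q] at hpq
  linarith [sum_add_sum_compl s fun a => |p a - q a|]

namespace LinearCode

open Matrix

variable {F : Type} [Field F] {k t Δ Θ : ℕ}
  (A : Matrix (Fin k) (Fin t) F) (B : Matrix (Fin k) (Fin Δ) F) (G : Matrix (Fin k) (Fin Θ) F)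

def noiseMap : ((Fin Δ → F) × (Fin Θ → F)) →ₗ[F] (Fin k → F) :=
  B.mulVecLin.coprod G.mulVecLin

def noiseRange : Submodule F (Fin k → F) :=
  LinearMap.range (noiseMap B G)

def maskedMessages : Submodule F (Fin t → F) :=
  (noiseRange B G).comap A.mulVecLin

variable [Fintype F] [DecidableEq F] {A B G}

lemma card_fiber_noiseMap_mul {v : Fin k → F} (hv : v ∈ noiseRange B G) :
    #{p | noiseMap B G p = v} * Nat.card (noiseRange B G) =
      Fintype.card ((Fin Δ → F) × (Fin Θ → F)) := by
  rw [noiseRange, ← SetLike.coe_sort_coe, LinearMap.coe_range]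
  exact (noiseMap B G).toAddMonoidHom.card_fiber_mul_natCard_range hv

lemma card_filter_sampleSpace (m : Fin t → F) (c : Fin k → F) :
    #{ω : SampleSpace F t Δ Θ | ω.1 = m ∧ A *ᵥ ω.1 + B *ᵥ ω.2.1 + G *ᵥ ω.2.2 = c} =
      #{p | noiseMap B G p = c - A *ᵥ m} := by
  refine card_nbij' Prod.snd (Prod.mk m) ?_ ?_ ?_ fun _ _ => rfl
  · intro ω
    simp +contextual [noiseMap, eq_sub_iff_add_eq', add_assoc]
  · intro p
    simp [noiseMap, eq_sub_iff_add_eq', add_assoc]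
  · intro ω hω
    simp only [coe_filter, mem_univ, true_and, Set.mem_ofPred_eq] at hω
    rw [← hω.1]

lemma jointMC_of_mem {m : Fin t → F} {c : Fin k → F} (h : c - A *ᵥ m ∈ noiseRange B G) :
    jointMC A B G m c = ((Fintype.card (Fin t → F) : ℝ) * Nat.card (noiseRange B G))⁻¹ := by
  have hfib := card_fiber_noiseMap_mul h
  have hfib0 : #{p | noiseMap B G p = c - A *ᵥ m} ≠ 0 := fun h0 => by simp [h0] at hfib
  rw [jointMC, card_filter_sampleSpace, Fintype.card_prod, ← hfib]
  push_cast
  field_simp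

lemma jointMC_of_notMem {m : Fin t → F} {c : Fin k → F} (h : c - A *ᵥ m ∉ noiseRange B G) :
    jointMC A B G m c = 0 := by
  rw [jointMC, card_filter_sampleSpace, card_eq_zero.mpr, Nat.cast_zero, zero_div]
  exact filter_eq_empty_iff.mpr fun p _ hp => h ⟨p, hp⟩

lemma pM_eq (m : Fin t → F) : pM A B G m = (Fintype.card (Fin t → F) : ℝ)⁻¹ := by
  classical
  have hR : (Nat.card (noiseRange B G) : ℝ) ≠ 0 := by exact_mod_cast Nat.card_pos.ne'
  rw [pM, ← sum_filter_of_ne fun c _ => not_imp_comm.mp jointMC_of_notMem,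
    sum_congr rfl fun c hc => jointMC_of_mem (mem_filter.mp hc).2, sum_const,
    card_filter_sub_mem, nsmul_eq_mul]
  field_simp

lemma sum_pM : ∑ m, pM A B G m = 1 := by
  simp only [pM_eq, sum_const, card_univ, nsmul_eq_mul]
  exact mul_inv_cancel₀ (by positivity)

lemma sum_pC : ∑ c, pC A B G c = 1 := by
  simp only [pC]
  rw [sum_comm]
  exact sum_pM

lemma pC_of_mem {m : Fin t → F} {c : Fin k → F} (h : c - A *ᵥ m ∈ noiseRange B G) :
    pC A B G c = Nat.card (maskedMessages A B G) *
      ((Fintype.card (Fin t → F) : ℝ) * Nat.card (noiseRange B G))⁻¹ := by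
  classical
  have hmem (m' : Fin t → F) : c - A *ᵥ m' ∈ noiseRange B G ↔ m' - m ∈ maskedMessages A B G := by
    rw [maskedMessages, Submodule.mem_comap, Matrix.mulVecLin_apply, Matrix.mulVec_sub,
      ← Submodule.sub_mem_iff_right _ h]
    abel_nf
  rw [pC, ← sum_filter_of_ne fun m' _ => not_imp_comm.mp jointMC_of_notMem,
    sum_congr rfl fun m' hm' => jointMC_of_mem (mem_filter.mp hm').2, sum_const, nsmul_eq_mul]
  simp only [hmem, card_filter_sub_mem]

lemma jointMC_eq_pM_mul_pC (hV : maskedMessages A B G = ⊤) (m : Fin t → F) (c : Fin k → F) :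
    jointMC A B G m c = pM A B G m * pC A B G c := by
  by_cases h : c - A *ᵥ m ∈ noiseRange B G
  · rw [jointMC_of_mem h, pM_eq, pC_of_mem h, hV, Nat.card_congr Submodule.topEquiv.toEquiv,
      Nat.card_eq_fintype_card (α := Fin t → F)]
    field_simp
  · have hc (m' : Fin t → F) : c - A *ᵥ m' ∉ noiseRange B G := by
      refine fun h' => h ?_
      have hmm' : m - m' ∈ maskedMessages A B G := hV ▸ Submodule.mem_top
      simpa [maskedMessages, Matrix.mulVec_sub] using sub_mem h' hmm'
    rw [jointMC_of_notMem h, pC, sum_eq_zero fun m' _ => jointMC_of_notMem (hc m'), mul_zero]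

lemma two_mul_sub_le_sum_abs_jointMC_sub (m : Fin t → F) :
    2 * ((Fintype.card (Fin t → F) : ℝ)⁻¹ -
        Nat.card (maskedMessages A B G) / (Fintype.card (Fin t → F) : ℝ) ^ 2) ≤
      ∑ c, |jointMC A B G m c - pM A B G m * pC A B G c| := by
  classical
  have hR : (Nat.card (noiseRange B G) : ℝ) ≠ 0 := by exact_mod_cast Nat.card_pos.ne'
  have hpq : ∑ c, jointMC A B G m c = ∑ c, pM A B G m * pC A B G c := by
    rw [← mul_sum, sum_pC, mul_one, pM]
  have hp : ∑ c with c - A *ᵥ m ∈ noiseRange B G, jointMC A B G m c =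
      (Fintype.card (Fin t → F) : ℝ)⁻¹ := by
    rw [sum_filter_of_ne fun c _ => not_imp_comm.mp jointMC_of_notMem, ← pM, pM_eq]
  have hq : ∑ c with c - A *ᵥ m ∈ noiseRange B G, pM A B G m * pC A B G c =
      Nat.card (maskedMessages A B G) / (Fintype.card (Fin t → F) : ℝ) ^ 2 := by
    rw [sum_congr rfl fun c hc => by rw [pM_eq, pC_of_mem (mem_filter.mp hc).2], sum_const,
      card_filter_sub_mem, nsmul_eq_mul]
    field_simp
  simpa only [hp, hq] using two_mul_sub_le_sum_abs_sub hpq {c | c - A *ᵥ m ∈ noiseRange B G}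

lemma one_sub_div_le_tvMC :
    1 - Nat.card (maskedMessages A B G) / (Fintype.card (Fin t → F) : ℝ) ≤ tvMC A B G := by
  have hN : (Fintype.card (Fin t → F) : ℝ) ≠ 0 := by positivity
  have hrows := card_nsmul_le_sum univ _ _ fun m _ => two_mul_sub_le_sum_abs_jointMC_sub
    (A := A) (B := B) (G := G) m
  rw [card_univ, nsmul_eq_mul] at hrows
  calc 1 - Nat.card (maskedMessages A B G) / (Fintype.card (Fin t → F) : ℝ)
      = 2⁻¹ * (Fintype.card (Fin t → F) * (2 * ((Fintype.card (Fin t → F) : ℝ)⁻¹ -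
          Nat.card (maskedMessages A B G) / (Fintype.card (Fin t → F) : ℝ) ^ 2))) := by
        field_simp
    _ ≤ tvMC A B G := by
        rw [tvMC]
        gcongr

lemma one_sub_inv_card_le_tvMC (hV : maskedMessages A B G ≠ ⊤) :
    1 - (Fintype.card F : ℝ)⁻¹ ≤ tvMC A B G := by
  have hq : (0 : ℝ) < Fintype.card F := by exact_mod_cast Fintype.card_pos
  have hindex : (Fintype.card F * Nat.card (maskedMessages A B G) : ℝ) ≤
      Fintype.card (Fin t → F) := by
    exact_mod_cast Nat.card_eq_fintype_card (α := Fin t → F) ▸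
      Submodule.card_mul_natCard_le_of_ne_top hV
  refine le_trans ?_ one_sub_div_le_tvMC
  gcongr
  rw [div_le_iff₀ (by positivity), inv_mul_eq_div, le_div_iff₀ hq]
  linarith

end LinearCode

/-- For a linear code `C = AM + BK + GW` with `M, K, W` mutually
independent and uniform, the total variation distance `‖p_{M,C} − p_M ⊗ p_C‖₁` is
either `0` or at least `1 − 1/|F| ≥ 1/2`; consequently if it is at most some `ε < 1/2`,
then `M` and `C` are independent (perfect secrecy). -/
theorem tv_dichotomy_linear_code {F : Type} [Field F] [Fintype F] [DecidableEq F]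
    {k t Δ Θ : ℕ} (A : Matrix (Fin k) (Fin t) F) (B : Matrix (Fin k) (Fin Δ) F)
    (G : Matrix (Fin k) (Fin Θ) F) :
    (tvMC A B G = 0 ∨ 1 - (Fintype.card F : ℝ)⁻¹ ≤ tvMC A B G) ∧
    (1 / 2 : ℝ) ≤ 1 - (Fintype.card F : ℝ)⁻¹ ∧
    (∀ ε : ℝ, ε < 1 / 2 → tvMC A B G ≤ ε →
      ∀ (m : Fin t → F) (c : Fin k → F),
        jointMC A B G m c = pM A B G m * pC A B G c) := by
  have half_le : (1 / 2 : ℝ) ≤ 1 - (Fintype.card F : ℝ)⁻¹ := by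
    have hq : (2 : ℝ) ≤ Fintype.card F := by exact_mod_cast Fintype.one_lt_card
    linarith [inv_anti₀ two_pos hq]
  by_cases hV : LinearCode.maskedMessages A B G = ⊤
  · have hindep := LinearCode.jointMC_eq_pM_mul_pC hV
    exact ⟨Or.inl (by simp [tvMC, hindep]), half_le, fun _ _ _ => hindep⟩
  · have hlow := LinearCode.one_sub_inv_card_le_tvMC hV
    exact ⟨Or.inr hlow, half_le, fun ε hε htv => absurd (hlow.trans htv) (by linarith)⟩
end
end

section
/- Let F be a finite field and let M₁, M₂, K₂, W be mutually independent random vectors, uniformly distributed over F^{a}, F^{b}, F^{d}, F^{e} respectively. Let Z = A₁M₁ + A₂M₂ + B₂K₂ + GW ∈ F^k for matrices A₁, A₂, B₂, G over F, and let L ⊆ F^k be the column space of the concatenated matrix [A₂ B₂ G]. Say that (z, m₁) is compatible if z − A₁m₁ ∈ L. Then for every z ∈ F^k with P(Z = z) > 0: P(M₁ = m₁ | Z = z) = 0 if (z, m₁) is not compatible, and P(M₁ = m₁ | Z = z) = 1/N_z for every compatible m₁, where N_z is the number of m₁ ∈ F^a compatible with z. In other words, given Z = z, the conditional distribution of M₁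 is uniform over the set of messages compatible with z. -/
open Finset

noncomputable section

/-- Sample space: `(M₁, M₂, K₂, W)`, mutually independent and uniform over
`F^a × F^b × F^d × F^e`, modeled as the uniform distribution on this product. -/
abbrev ZSpace (F : Type) (a b d e : ℕ) : Type :=
  (Fin a → F) × (Fin b → F) × (Fin d → F) × (Fin e → F)

/-- The random vector `Z = A₁M₁ + A₂M₂ + B₂K₂ + GW`. -/
def zRV {F : Type} [Field F] [Fintype F] [DecidableEq F] {k a b d e : ℕ}
    (A₁ : Matrix (Fin k) (Fin a) F) (A₂ : Matrix (Fin k) (Fin b) F)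
    (B₂ : Matrix (Fin k) (Fin d) F) (G : Matrix (Fin k) (Fin e) F)
    (ω : ZSpace F a b d e) : Fin k → F :=
  A₁.mulVec ω.1 + A₂.mulVec ω.2.1 + B₂.mulVec ω.2.2.1 + G.mulVec ω.2.2.2

/-- `(z, m₁)` is compatible if `z − A₁m₁` lies in the column space of `[A₂ B₂ G]`,
i.e. the equation `A₂m₂ + B₂k₂ + Gw = z − A₁m₁` has a solution. -/
def Compatible {F : Type} [Field F] {k a b d e : ℕ}
    (A₁ : Matrix (Fin k) (Fin a) F) (A₂ : Matrix (Fin k) (Fin b) F)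
    (B₂ : Matrix (Fin k) (Fin d) F) (G : Matrix (Fin k) (Fin e) F)
    (z : Fin k → F) (m₁ : Fin a → F) : Prop :=
  ∃ (m₂ : Fin b → F) (κ₂ : Fin d → F) (w : Fin e → F),
    A₂.mulVec m₂ + B₂.mulVec κ₂ + G.mulVec w = z - A₁.mulVec m₁

/-- The number `N_z` of messages `m₁` compatible with `z`. -/
def Ncompat {F : Type} [Field F] [Fintype F] {k a b d e : ℕ}
    (A₁ : Matrix (Fin k) (Fin a) F) (A₂ : Matrix (Fin k) (Fin b) F)
    (B₂ : Matrix (Fin k) (Fin d) F) (G : Matrix (Fin k) (Fin e) F)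
    (z : Fin k → F) : ℕ :=
  Nat.card {m₁ : Fin a → F // Compatible A₁ A₂ B₂ G z m₁}

/-- The conditional probability `P(M₁ = m₁ | Z = z)`, computed by counting. -/
def condP {F : Type} [Field F] [Fintype F] [DecidableEq F] {k a b d e : ℕ}
    (A₁ : Matrix (Fin k) (Fin a) F) (A₂ : Matrix (Fin k) (Fin b) F)
    (B₂ : Matrix (Fin k) (Fin d) F) (G : Matrix (Fin k) (Fin e) F)
    (z : Fin k → F) (m₁ : Fin a → F) : ℝ :=
  (Nat.card {ω : ZSpace F a b d e // ω.1 = m₁ ∧ zRV A₁ A₂ B₂ G ω = z} : ℝ) /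
    (Nat.card {ω : ZSpace F a b d e // zRV A₁ A₂ B₂ G ω = z} : ℝ)

private lemma aux_fiber_card {F : Type} [Field F] [Fintype F] [DecidableEq F]
    {k b d e : ℕ} (A₂ : Matrix (Fin k) (Fin b) F)
    (B₂ : Matrix (Fin k) (Fin d) F) (G : Matrix (Fin k) (Fin e) F)
    (v : Fin k → F) :
    Nat.card {x : (Fin b → F) × (Fin d → F) × (Fin e → F) //
      A₂.mulVec x.1 + B₂.mulVec x.2.1 + G.mulVec x.2.2 = v} =
    if ∃ x : (Fin b → F) × (Fin d → F) × (Fin e → F),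
        A₂.mulVec x.1 + B₂.mulVec x.2.1 + G.mulVec x.2.2 = v then
      Nat.card {x : (Fin b → F) × (Fin d → F) × (Fin e → F) //
        A₂.mulVec x.1 + B₂.mulVec x.2.1 + G.mulVec x.2.2 = 0} else 0 := by
  split_ifs with h
  · obtain ⟨x₀, hx₀⟩ := h
    refine Nat.card_congr ⟨fun p => ⟨p.1 - x₀, ?_⟩, fun p => ⟨p.1 + x₀, ?_⟩, ?_, ?_⟩
    · have hx := p.2
      simp only [Prod.fst_sub, Prod.snd_sub, Matrix.mulVec_sub]
      linear_combination hx - hx₀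
    · have hx := p.2
      simp only [Prod.fst_add, Prod.snd_add, Matrix.mulVec_add]
      linear_combination hx + hx₀
    · intro p; apply Subtype.ext; simp
    · intro p; apply Subtype.ext; simp
  · have : IsEmpty {x : (Fin b → F) × (Fin d → F) × (Fin e → F) //
        A₂.mulVec x.1 + B₂.mulVec x.2.1 + G.mulVec x.2.2 = v} :=
      ⟨fun p => h ⟨p.1, p.2⟩⟩
    exact Nat.card_of_isEmpty

/-- For every `z` with `P(Z = z) > 0`: `P(M₁ = m₁ | Z = z) = 0` if
`(z, m₁)` is not compatible, and `P(M₁ = m₁ | Z = z) = 1/N_z` for every compatible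
`m₁`; i.e. given `Z = z`, `M₁` is conditionally uniform over the compatible messages. -/
theorem cond_uniform_over_compatible {F : Type} [Field F] [Fintype F] [DecidableEq F]
    {k a b d e : ℕ}
    (A₁ : Matrix (Fin k) (Fin a) F) (A₂ : Matrix (Fin k) (Fin b) F)
    (B₂ : Matrix (Fin k) (Fin d) F) (G : Matrix (Fin k) (Fin e) F)
    (z : Fin k → F)
    (hz : 0 < Nat.card {ω : ZSpace F a b d e // zRV A₁ A₂ B₂ G ω = z}) :
    ∀ m₁ : Fin a → F,
      (¬ Compatible A₁ A₂ B₂ G z m₁ → condP A₁ A₂ B₂ G z m₁ = 0) ∧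
      (Compatible A₁ A₂ B₂ G z m₁ →
        condP A₁ A₂ B₂ G z m₁ = (Ncompat A₁ A₂ B₂ G z : ℝ)⁻¹) := by
  classical
  -- kernel cardinality
  set c : ℕ := Nat.card {x : (Fin b → F) × (Fin d → F) × (Fin e → F) //
      A₂.mulVec x.1 + B₂.mulVec x.2.1 + G.mulVec x.2.2 = 0} with hc
  have hcpos : 0 < c := by
    rw [hc]
    have : Nonempty {x : (Fin b → F) × (Fin d → F) × (Fin e → F) //
        A₂.mulVec x.1 + B₂.mulVec x.2.1 + G.mulVec x.2.2 = 0} :=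
      ⟨⟨0, by simp⟩⟩
    exact Nat.card_pos
  -- compatibility rephrased
  have hcompat : ∀ m₁ : Fin a → F, Compatible A₁ A₂ B₂ G z m₁ ↔
      ∃ x : (Fin b → F) × (Fin d → F) × (Fin e → F),
        A₂.mulVec x.1 + B₂.mulVec x.2.1 + G.mulVec x.2.2 = z - A₁.mulVec m₁ := by
    intro m₁
    constructor
    · rintro ⟨m₂, κ₂, w, h⟩; exact ⟨(m₂, κ₂, w), h⟩
    · rintro ⟨⟨m₂, κ₂, w⟩, h⟩; exact ⟨m₂, κ₂, w, h⟩
  -- numerator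
  have hnum : ∀ m₁ : Fin a → F,
      Nat.card {ω : ZSpace F a b d e // ω.1 = m₁ ∧ zRV A₁ A₂ B₂ G ω = z} =
      Nat.card {x : (Fin b → F) × (Fin d → F) × (Fin e → F) //
        A₂.mulVec x.1 + B₂.mulVec x.2.1 + G.mulVec x.2.2 = z - A₁.mulVec m₁} := by
    intro m₁
    refine Nat.card_congr ⟨fun p => ⟨(p.1.2.1, p.1.2.2.1, p.1.2.2.2), ?_⟩,
      fun x => ⟨(m₁, x.1.1, x.1.2.1, x.1.2.2), rfl, ?_⟩, ?_, ?_⟩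
    · obtain ⟨ω, h1, h2⟩ := p
      simp only [zRV] at h2
      rw [h1] at h2
      linear_combination h2
    · have h := x.2
      simp only [zRV]
      linear_combination h
    · rintro ⟨⟨w1, w2, w3, w4⟩, h1, h2⟩
      simp only at h1
      subst h1
      rfl
    · rintro ⟨⟨x1, x2, x3⟩, h⟩
      rfl
  -- denominator
  have hden : Nat.card {ω : ZSpace F a b d e // zRV A₁ A₂ B₂ G ω = z} =
      ∑ m₁ : Fin a → F, Nat.card {x : (Fin b → F) × (Fin d → F) × (Fin e → F) //
        A₂.mulVec x.1 + B₂.mulVec x.2.1 + G.mulVec x.2.2 = z - A₁.mulVec m₁} := by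
    have hequiv : {ω : ZSpace F a b d e // zRV A₁ A₂ B₂ G ω = z} ≃
        Σ m₁ : Fin a → F, {x : (Fin b → F) × (Fin d → F) × (Fin e → F) //
          A₂.mulVec x.1 + B₂.mulVec x.2.1 + G.mulVec x.2.2 = z - A₁.mulVec m₁} := by
      refine ⟨fun p => ⟨p.1.1, ⟨(p.1.2.1, p.1.2.2.1, p.1.2.2.2), ?_⟩⟩,
        fun q => ⟨(q.1, q.2.1.1, q.2.1.2.1, q.2.1.2.2), ?_⟩, ?_, ?_⟩
      · have h := p.2
        simp only [zRV] at h
        linear_combination h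
      · have h := q.2.2
        simp only [zRV]
        linear_combination h
      · rintro ⟨⟨w1, w2, w3, w4⟩, h⟩
        rfl
      · rintro ⟨m₁, ⟨x1, x2, x3⟩, h⟩
        rfl
    rw [Nat.card_congr hequiv]
    rw [Nat.card_eq_fintype_card, Fintype.card_sigma]
    simp [Nat.card_eq_fintype_card]
  -- rewrite fibers with the if-expression
  have hfib := fun m₁ : Fin a → F =>
    aux_fiber_card A₂ B₂ G (z - A₁.mulVec m₁)
  -- denominator value
  have hNc : Nat.card {ω : ZSpace F a b d e // zRV A₁ A₂ B₂ G ω = z} =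
      Ncompat A₁ A₂ B₂ G z * c := by
    rw [hden]
    calc ∑ m₁ : Fin a → F, Nat.card {x : (Fin b → F) × (Fin d → F) × (Fin e → F) //
          A₂.mulVec x.1 + B₂.mulVec x.2.1 + G.mulVec x.2.2 = z - A₁.mulVec m₁}
        = ∑ m₁ : Fin a → F, if Compatible A₁ A₂ B₂ G z m₁ then c else 0 := by
          refine Finset.sum_congr rfl fun m₁ _ => ?_
          rw [hfib m₁]
          simp only [← hcompat m₁, hc]
      _ = (Finset.univ.filter fun m₁ : Fin a → F =>
            Compatible A₁ A₂ B₂ G z m₁).card * c := by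
          rw [Finset.sum_ite, Finset.sum_const, Finset.sum_const]
          simp [Nat.mul_comm]
      _ = Ncompat A₁ A₂ B₂ G z * c := by
          congr 1
          rw [Ncompat, Nat.card_eq_fintype_card, Fintype.card_subtype]
  intro m₁
  constructor
  · intro hnc
    rw [condP, hnum m₁, hfib m₁, if_neg (fun hx => hnc ((hcompat m₁).2 hx))]
    simp
  · intro hcp
    have hNpos : 0 < Ncompat A₁ A₂ B₂ G z := by
      rw [Ncompat]
      have : Nonempty {m₁' : Fin a → F // Compatible A₁ A₂ B₂ G z m₁'} := ⟨⟨m₁, hcp⟩⟩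
      exact Nat.card_pos
    rw [condP, hnum m₁, hfib m₁, if_pos ((hcompat m₁).1 hcp), hNc, ← hc]
    push_cast
    rw [mul_comm]
    rw [div_mul_eq_div_div, div_self (by exact_mod_cast hcpos.ne' : (c:ℝ) ≠ 0), one_div]
end
end

section
/- Let F be a finite field, let m ≤ n be positive integers, and let A be a random m×n matrix over F whose entries are mutually independent and uniformly distributed on F. Then the probability that A is not of full row rank satisfies P( rank(A) < m ) ≤ |F|^{−(n−m)} / (|F| − 1). -/
/-!
`A` has rank `< m` iff some nonzero `x` satisfies `x ᵥ* A = 0`. For a fixed `x ≠ 0` the map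
`A ↦ x ᵥ* A` is a surjective linear map onto `Fⁿ`, so it kills exactly `q^((m-1)n)` matrices,
where `q = |F|`. A rank-deficient `A` is killed by all `q - 1` nonzero multiples of such an `x`,
so double counting the pairs `(A, x)` gives `(q - 1) · #{rank A < m} ≤ (q^m - 1) q^((m-1)n)`,
which is the claimed bound after dividing by `q^(mn)`.
-/

open Finset

theorem AddMonoidHom.card_ker_mul_card_of_surjective {G H : Type*} [AddGroup G] [AddGroup H]
    (f : G →+ H) (hf : Function.Surjective f) : Nat.card f.ker * Nat.card H = Nat.card G := by
  rw [← f.ker.card_mul_index, AddSubgroup.index_ker, f.range_eq_top_of_surjective hf,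
    AddSubgroup.card_top]

theorem Nat.card_matrix {m n α : Type*} [Fintype m] [Fintype n] :
    Nat.card (Matrix m n α) = Nat.card α ^ (Fintype.card m * Fintype.card n) := by
  change Nat.card (m → n → α) = _
  simp [Nat.card_fun, ← pow_mul, mul_comm]

namespace Matrix

variable {m n K : Type*} [Fintype m] [Field K]

theorem rank_lt_card_height_iff [Fintype n] (A : Matrix m n K) :
    A.rank < Fintype.card m ↔ ∃ x ≠ 0, x ᵥ* A = 0 := by
  have hli : LinearIndependent K A.row ↔ A.rank = Fintype.card m := by
    rw [linearIndependent_iff_card_eq_finrank_span, rank_eq_finrank_span_row, eq_comm]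
    rfl
  rw [A.rank_le_card_height.lt_iff_ne, Ne, ← hli, ← vecMul_injective_iff, ← coe_vecMulLinear,
    injective_iff_map_eq_zero]
  push Not
  simp only [coe_vecMulLinear, and_comm]

theorem vecMul_surjective_of_ne_zero {x : m → K} (hx : x ≠ 0) :
    Function.Surjective fun A : Matrix m n K => x ᵥ* A := by
  classical
  obtain ⟨i, hi⟩ := Function.ne_iff.mp hx
  intro y
  refine ⟨vecMulVec (Pi.single i (x i)⁻¹) y, ?_⟩
  simp [vecMul_vecMulVec, dotProduct_single, mul_inv_cancel₀ hi]

variable [Finite K]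

theorem card_vecMul_eq_zero [Fintype n] {x : m → K} (hx : x ≠ 0) :
    Nat.card {A : Matrix m n K // x ᵥ* A = 0} =
      Nat.card K ^ ((Fintype.card m - 1) * Fintype.card n) := by
  have hker := (vecMulBilin K K x : Matrix m n K →ₗ[K] n → K).toAddMonoidHom
    |>.card_ker_mul_card_of_surjective (vecMul_surjective_of_ne_zero hx)
  rw [Nat.card_matrix, Nat.card_fun, Nat.card_eq_fintype_card (α := n)] at hker
  obtain ⟨i, -⟩ := Function.ne_iff.mp hx
  have hm : 1 ≤ Fintype.card m := Fintype.card_pos_iff.mpr ⟨i⟩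
  refine Nat.eq_of_mul_eq_mul_right (pow_pos (Nat.card_pos (α := K)) (Fintype.card n)) ?_
  rwa [← pow_add, ← Nat.succ_mul, Nat.succ_eq_add_one, Nat.sub_add_cancel hm]

theorem card_rank_lt_mul_le [Fintype n] :
    Nat.card {A : Matrix m n K // A.rank < Fintype.card m} * (Nat.card K - 1) ≤
      (Nat.card K ^ Fintype.card m - 1) * Nat.card K ^ ((Fintype.card m - 1) * Fintype.card n) := by
  classical
  have := Fintype.ofFinite K
  let bad : Finset (Matrix m n K) := {A | A.rank < Fintype.card m}
  let nonzero : Finset (m → K) := univ.erase 0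
  have hbad : #bad = Nat.card {A : Matrix m n K // A.rank < Fintype.card m} := by
    rw [Nat.card_eq_fintype_card, Fintype.card_subtype]
  have hnonzero : #nonzero = Nat.card K ^ Fintype.card m - 1 := by
    rw [card_erase_of_mem (mem_univ _), card_univ, Fintype.card_fun, Nat.card_eq_fintype_card]
  rw [← hbad, ← hnonzero]
  refine card_mul_le_card_mul (fun A x => x ᵥ* A = 0) (fun A hA => ?_) (fun x hx => ?_)
  · obtain ⟨x, hx, hxA⟩ := (rank_lt_card_height_iff A).mp (mem_filter.mp hA).2
    calc Nat.card K - 1 = #((univ : Finset K).erase 0) := by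
          rw [card_erase_of_mem (mem_univ _), card_univ, Nat.card_eq_fintype_card]
      _ ≤ #(nonzero.bipartiteAbove (fun A x => x ᵥ* A = 0) A) := by
          refine card_le_card_of_injOn (· • x) (fun c hc => ?_) (smul_left_injective K hx).injOn
          simp [bipartiteAbove, nonzero, smul_vecMul, hxA, hx, ne_of_mem_erase hc]
  · calc #(bad.bipartiteBelow (fun A x => x ᵥ* A = 0) x) ≤ #{A : Matrix m n K | x ᵥ* A = 0} :=
          card_le_card (monotone_filter_left _ (subset_univ _))
      _ = _ := by
        rw [← card_vecMul_eq_zero (ne_of_mem_erase hx), Nat.card_eq_fintype_card,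
          Fintype.card_subtype]

end Matrix

/-- Let `F` be a finite field, `m ≤ n` positive integers, and `A` a
uniformly random `m×n` matrix over `F` (mutually independent uniform entries). Then
`P(rank(A) < m) ≤ |F|^{−(n−m)} / (|F| − 1)`. -/
theorem random_matrix_full_rank {F : Type} [Field F] [Fintype F] {m n : ℕ}
    (hm : 0 < m) (hmn : m ≤ n) :
    ((Nat.card {A : Matrix (Fin m) (Fin n) F // A.rank < m}) : ℝ) /
      (Fintype.card (Matrix (Fin m) (Fin n) F) : ℝ)
    ≤ ((Fintype.card F : ℝ) ^ (n - m))⁻¹ / ((Fintype.card F : ℝ) - 1) := by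
  set q := Fintype.card F
  have hq : 1 < q := Fintype.one_lt_card
  have hcount : (Nat.card {A : Matrix (Fin m) (Fin n) F // A.rank < m} : ℝ) * (q - 1) ≤
      q ^ m * q ^ ((m - 1) * n) := by
    have h := Matrix.card_rank_lt_mul_le (m := Fin m) (n := Fin n) (K := F)
    simp only [Fintype.card_fin, Nat.card_eq_fintype_card (α := F)] at h
    have h' := h.trans (Nat.mul_le_mul_right _ (Nat.sub_le _ 1))
    rw [← Nat.cast_pred hq.le]
    exact_mod_cast h'
  have hcard : Fintype.card (Matrix (Fin m) (Fin n) F) = q ^ (m * n) := by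
    rw [← Nat.card_eq_fintype_card, Nat.card_matrix]
    simp [q]
  have hexp : m + (m - 1) * n + (n - m) = m * n := by
    zify [show 1 ≤ m from hm, hmn]
    ring
  have hq' : (1 : ℝ) < q := by exact_mod_cast hq
  rw [hcard, div_le_div_iff₀ (by positivity) (by linarith)]
  calc _ ≤ (q : ℝ) ^ m * q ^ ((m - 1) * n) := hcount
    _ = ((q : ℝ) ^ (n - m))⁻¹ * (q ^ (m * n) : ℕ) := by
      rw [← hexp]
      push_cast
      rw [pow_add, pow_add]
      field_simp
end
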